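/- Let f be a homeomorphism of a compact metric space (X,d) and let n be a positive integer. If f is n-expansive, topologically transitive, and has the L-shadowing property, then there exists ε > 0 such that for every pair of points x, y ∈ X the following holds: whenever U is a finite subset of W^u_ε(x) whose points pairwise belong to different unstable sets (i.e., q ∉ W^u(q') for all distinct q, q' ∈ U) and S is a finite subset of W^s_ε(y) whose points pairwise belong to different stable sets (i.e., p ∉ W^s(p') for all distinct p, p' ∈ S), then |U| · |S| ≤ n. -/
import Mathlib


open Metric Filter Set

variable {X : Type*} [MetricSpace X]

/-- The iterate of a homeomorphism by an integer power. -/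
def hIter (f : X ≃ₜ X) (k : ℤ) (x : X) : X := (f.toEquiv ^ k) x

/-- The local stable set of `x` of size `c`:
points whose forward iterates stay `c`-close to those of `x`. -/
def localStable (f : X ≃ₜ X) (c : ℝ) (x : X) : Set X :=
  {y | ∀ k : ℕ, dist ((⇑f)^[k] y) ((⇑f)^[k] x) ≤ c}

/-- The local unstable set of `x` of size `c`:
points whose backward iterates stay `c`-close to those of `x`. -/
def localUnstable (f : X ≃ₜ X) (c : ℝ) (x : X) : Set X :=
  {y | ∀ k : ℕ, dist ((⇑f.symm)^[k] y) ((⇑f.symm)^[k] x) ≤ c}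

/-- The stable set of `x`. -/
def stableSet (f : X ≃ₜ X) (x : X) : Set X :=
  {y | Tendsto (fun k : ℕ => dist ((⇑f)^[k] y) ((⇑f)^[k] x)) atTop (nhds 0)}

/-- The unstable set of `x`. -/
def unstableSet (f : X ≃ₜ X) (x : X) : Set X :=
  {y | Tendsto (fun k : ℕ => dist ((⇑f.symm)^[k] y) ((⇑f.symm)^[k] x)) atTop (nhds 0)}

/-- `f` is positively `n`-expansive: for some `c > 0` every local stable set of
size `c` contains at most `n` points. -/
def PosNExpansive (f : X ≃ₜ X) (n : ℕ) : Prop :=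
  ∃ c > 0, ∀ x : X, ∀ S : Finset X, ↑S ⊆ localStable f c x → S.card ≤ n

/-- `f` is `n`-expansive: for some `c > 0` every dynamical ball of size `c`
contains at most `n` points. -/
def NExpansive (f : X ≃ₜ X) (n : ℕ) : Prop :=
  ∃ c > 0, ∀ x : X, ∀ S : Finset X,
    ↑S ⊆ localStable f c x ∩ localUnstable f c x → S.card ≤ n

/-- `f` is expansive. -/
def Expansive (f : X ≃ₜ X) : Prop :=
  ∃ c > 0, ∀ x y : X, (∀ k : ℤ, dist (hIter f k x) (hIter f k y) ≤ c) → x = y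

/-- `(x_k)_{k ∈ ℤ}` is a `δ`-pseudo-orbit. -/
def IsPseudoOrbit (f : X ≃ₜ X) (δ : ℝ) (x : ℤ → X) : Prop :=
  ∀ k : ℤ, dist (f (x k)) (x (k + 1)) < δ

/-- `(x_k)_{k ∈ ℤ}` is a two-sided limit pseudo-orbit:
`d(f(x_k), x_{k+1}) → 0` as `|k| → ∞`. -/
def IsTwoSidedLimitPseudoOrbit (f : X ≃ₜ X) (x : ℤ → X) : Prop :=
  Tendsto (fun k : ℤ => dist (f (x k)) (x (k + 1))) cofinite (nhds 0)

/-- `z` `ε`-shadows the sequence `(x_k)_{k ∈ ℤ}`. -/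
def Shadows (f : X ≃ₜ X) (ε : ℝ) (z : X) (x : ℤ → X) : Prop :=
  ∀ k : ℤ, dist (hIter f k z) (x k) < ε

/-- `z` two-sided limit shadows `(x_k)_{k ∈ ℤ}`. -/
def TwoSidedLimitShadows (f : X ≃ₜ X) (z : X) (x : ℤ → X) : Prop :=
  Tendsto (fun k : ℤ => dist (hIter f k z) (x k)) cofinite (nhds 0)

/-- The shadowing property. -/
def ShadowingProperty (f : X ≃ₜ X) : Prop :=
  ∀ ε > 0, ∃ δ > 0, ∀ x : ℤ → X, IsPseudoOrbit f δ x → ∃ z : X, Shadows f ε z x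

/-- The L-shadowing property. -/
def LShadowingProperty (f : X ≃ₜ X) : Prop :=
  ∀ ε > 0, ∃ δ > 0, ∀ x : ℤ → X, IsPseudoOrbit f δ x →
    IsTwoSidedLimitPseudoOrbit f x →
    ∃ z : X, Shadows f ε z x ∧ TwoSidedLimitShadows f z x

/-- Topological transitivity. -/
def TopTransitive (f : X ≃ₜ X) : Prop :=
  ∀ U V : Set X, IsOpen U → IsOpen V → U.Nonempty → V.Nonempty →
    ∃ k : ℕ, ((⇑f)^[k] '' U ∩ V).Nonempty

/-- There is a nontrivial finite `ε`-pseudo-orbit from `x` to `y`. -/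
def ChainFrom (f : X ≃ₜ X) (ε : ℝ) (x y : X) : Prop :=
  ∃ (l : ℕ) (c : ℕ → X), 0 < l ∧ c 0 = x ∧ c l = y ∧
    ∀ k < l, dist (f (c k)) (c (k + 1)) < ε

/-- `x` is a chain recurrent point of `f`. -/
def ChainRecurrent (f : X ≃ₜ X) (x : X) : Prop :=
  ∀ ε > 0, ChainFrom f ε x x

/-- The chain recurrent class of `x`. -/
def chainClass (f : X ≃ₜ X) (x : X) : Set X :=
  {y | ∀ ε > 0, ChainFrom f ε x y ∧ ChainFrom f ε y x}

/-- `x` is a periodic point of `f`. -/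
def Periodic (f : X ≃ₜ X) (x : X) : Prop :=
  ∃ k : ℕ, 1 ≤ k ∧ (⇑f)^[k] x = x

/-- `x` is a non-wandering point of `f`. -/
def NonWandering (f : X ≃ₜ X) (x : X) : Prop :=
  ∀ U : Set X, IsOpen U → x ∈ U → ∃ k : ℕ, 0 < k ∧ ((⇑f)^[k] '' U ∩ U).Nonempty

/-- The omega limit set of `x`: accumulation points of the forward orbit. -/
def omegaLimitSet (f : X ≃ₜ X) (x : X) : Set X :=
  {y | ∃ φ : ℕ → ℕ, StrictMono φ ∧ Tendsto (fun n => (⇑f)^[φ n] x) atTop (nhds y)}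

/-- `z` two-sided limit shadows `(x_k)` with gap `K`. -/
def TwoSidedLimitShadowsWithGap (f : X ≃ₜ X) (K : ℤ) (z : X) (x : ℤ → X) : Prop :=
  Tendsto (fun k : ℤ => dist (hIter f k z) (x k)) atBot (nhds 0) ∧
  Tendsto (fun k : ℤ => dist (hIter f (K + k) z) (x k)) atTop (nhds 0)

lemma hIter_natCast (f : X ≃ₜ X) (k : ℕ) (x : X) : hIter f (k : ℤ) x = (⇑f)^[k] x := by
  rw [hIter, zpow_natCast, Equiv.Perm.coe_pow]; rfl

lemma hIter_neg_natCast (f : X ≃ₜ X) (k : ℕ) (x : X) :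
    hIter f (-(k : ℤ)) x = (⇑f.symm)^[k] x := by
  rw [hIter, zpow_neg, zpow_natCast, ← inv_pow, Equiv.Perm.coe_pow]; rfl

lemma hIter_add (f : X ≃ₜ X) (a b : ℤ) (x : X) :
    hIter f (a + b) x = hIter f a (hIter f b x) := by
  rw [hIter, hIter, hIter, zpow_add, Equiv.Perm.mul_apply]

lemma hIter_zero (f : X ≃ₜ X) (x : X) : hIter f 0 x = x := by
  rw [hIter, zpow_zero]; rfl

lemma hIter_succ (f : X ≃ₜ X) (k : ℤ) (x : X) : hIter f (k + 1) x = f (hIter f k x) := by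
  rw [add_comm, hIter_add]
  have : hIter f 1 (hIter f k x) = f (hIter f k x) := by rw [hIter, zpow_one]; rfl
  rw [this]

theorem stmt3 {X : Type*} [MetricSpace X] [CompactSpace X] (f : X ≃ₜ X) (n : ℕ)
    (hn : 0 < n) (hexp : NExpansive f n) (htrans : TopTransitive f)
    (hL : LShadowingProperty f) :
    ∃ ε > 0, ∀ x y : X, ∀ U S : Finset X,
      ↑U ⊆ localUnstable f ε x →
      (∀ q ∈ U, ∀ q' ∈ U, q ≠ q' → q ∉ unstableSet f q') →
      ↑S ⊆ localStable f ε y →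
      (∀ p ∈ S, ∀ p' ∈ S, p ≠ p' → p ∉ stableSet f p') →
      U.card * S.card ≤ n := by
  classical
  obtain ⟨c, hc, hcard⟩ := hexp
  obtain ⟨δ0, hδ0, hLsh⟩ := hL (c / 8) (by positivity)
  have hucf : UniformContinuous ⇑f :=
    CompactSpace.uniformContinuous_of_continuous f.continuous
  obtain ⟨η, hη, hmod⟩ := Metric.uniformContinuous_iff.mp hucf (δ0 / 8) (by positivity)
  refine ⟨min (c / 8) (min (η / 2) (δ0 / 8)), by positivity, ?_⟩
  set ε := min (c / 8) (min (η / 2) (δ0 / 8)) with hεdef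
  have hεc : ε ≤ c / 8 := min_le_left _ _
  have hεη : ε < η := lt_of_le_of_lt ((min_le_right _ _).trans (min_le_left _ _)) (by linarith)
  have hεδ : ε ≤ δ0 / 8 := (min_le_right _ _).trans (min_le_right _ _)
  intro x y U S hU hUdist hS hSdist
  rcases Finset.eq_empty_or_nonempty U with rfl | ⟨q₀, hq₀⟩
  · simp
  rcases Finset.eq_empty_or_nonempty S with rfl | ⟨p₀, hp₀⟩
  · simp
  -- transitivity chain from x to y
  obtain ⟨k0, w, hw⟩ := htrans (Metric.ball x η) (⇑f ⁻¹' (⇑f ⁻¹' Metric.ball y (δ0 / 8)))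
    Metric.isOpen_ball ((Metric.isOpen_ball.preimage f.continuous).preimage f.continuous)
    ⟨x, Metric.mem_ball_self hη⟩
    ⟨f.symm (f.symm y), by
      simp only [Set.mem_preimage, Homeomorph.apply_symm_apply]
      exact Metric.mem_ball_self (by positivity)⟩
  obtain ⟨⟨u, hu, rfl⟩, hw2⟩ := hw
  set m : ℕ := k0 + 2 with hmdef
  have hm2 : 2 ≤ m := by omega
  have hmu : dist ((⇑f)^[m] u) y < δ0 / 8 := by
    have h1 : f (f ((⇑f)^[k0] u)) ∈ Metric.ball y (δ0 / 8) := hw2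
    have h2 : (⇑f)^[m] u = f (f ((⇑f)^[k0] u)) := by
      rw [hmdef, Function.iterate_succ_apply', Function.iterate_succ_apply']
    rw [h2]
    exact h1
  obtain ⟨cc, hcc0, hccm, hchain⟩ :
      ∃ cc : ℕ → X, cc 0 = x ∧ cc m = y ∧
        ∀ j < m, dist (f (cc j)) (cc (j + 1)) < δ0 / 8 := by
    refine ⟨fun j => if j = 0 then x else if j < m then (⇑f)^[j] u else y,
      by simp, by simp only [if_neg (by omega : ¬ m = 0), if_neg (lt_irrefl m)], ?_⟩
    intro j hj
    by_cases hj0 : j = 0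
    · subst hj0
      simp only [if_pos rfl, if_neg (by omega : ¬ (1 = 0)), if_pos (by omega : 1 < m)]
      have : dist x u < η := by
        have := Metric.mem_ball.mp hu; rwa [dist_comm]
      simpa using hmod this
    · by_cases hj1 : j + 1 < m
      · simp only [if_neg hj0, if_pos hj, if_neg (by omega : ¬ (j + 1 = 0)), if_pos hj1,
          ← Function.iterate_succ_apply' f j u]
        simp [dist_self]; positivity
      · have hjm : j + 1 = m := by omega
        simp only [if_neg hj0, if_pos hj, if_neg (by omega : ¬ (j + 1 = 0)), if_neg hj1]
        rw [← Function.iterate_succ_apply' f j u, show j.succ = m from hjm]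
        exact hmu
  -- the glued pseudo-orbits
  obtain ⟨P, hPle, hPmid, hPge⟩ :
      ∃ P : X → X → ℤ → X,
        (∀ q p (k : ℤ), k ≤ 0 → P q p k = hIter f k q) ∧
        (∀ q p (k : ℤ), 0 < k → k < (m : ℤ) → P q p k = cc k.toNat) ∧
        (∀ q p (k : ℤ), (m : ℤ) ≤ k → P q p k = hIter f (k - m) p) := by
    refine ⟨fun q p k =>
      if k ≤ 0 then hIter f k q else if k < (m : ℤ) then cc k.toNat else hIter f (k - m) p,
      ?_, ?_, ?_⟩
    · intro q p k hk; simp only [if_pos hk]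
    · intro q p k hk1 hk2; simp only [if_neg (by omega : ¬ k ≤ 0), if_pos hk2]
    · intro q p k hk
      simp only [if_neg (by omega : ¬ k ≤ 0), if_neg (by omega : ¬ k < (m : ℤ))]
  have hjump0 : ∀ q p : X, ∀ k : ℤ, (k < 0 ∨ (m : ℤ) ≤ k) →
      f (P q p k) = P q p (k + 1) := by
    intro q p k hk
    rcases hk with hk | hk
    · rw [hPle q p k (by omega), hPle q p (k + 1) (by omega), hIter_succ]
    · rw [hPge q p k hk, hPge q p (k + 1) (by omega), ← hIter_succ]
      congr 1; omega
  have hdqx : ∀ q ∈ U, dist q x ≤ ε := by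
    intro q hq
    have := hU (Finset.mem_coe.mpr hq) 0
    simpa using this
  have hdpy : ∀ p ∈ S, dist p y ≤ ε := by
    intro p hp
    have := hS (Finset.mem_coe.mpr hp) 0
    simpa using this
  have hpseudo : ∀ q ∈ U, ∀ p ∈ S, IsPseudoOrbit f δ0 (P q p) := by
    intro q hq p hp k
    by_cases hout : k < 0 ∨ (m : ℤ) ≤ k
    · rw [hjump0 q p k hout, dist_self]; exact hδ0
    · push_neg at hout
      obtain ⟨hk0, hkm⟩ := hout
      by_cases hke : k = 0
      · subst hke
        rw [show (0 : ℤ) + 1 = 1 by norm_num, hPle q p 0 le_rfl, hIter_zero,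
          hPmid q p 1 (by omega) (by omega), show ((1 : ℤ)).toNat = 1 from rfl]
        have h2 : dist (f q) (f x) < δ0 / 8 := hmod (lt_of_le_of_lt (hdqx q hq) hεη)
        have h3 : dist (f x) (cc 1) < δ0 / 8 := by
          have := hchain 0 (by omega); rwa [hcc0] at this
        calc dist (f q) (cc 1) ≤ dist (f q) (f x) + dist (f x) (cc 1) := dist_triangle _ _ _
          _ < δ0 / 8 + δ0 / 8 := by linarith
          _ < δ0 := by linarith
      · have hk0' : 0 < k := by omega
        rw [hPmid q p k hk0' hkm]
        by_cases hk1 : k + 1 < (m : ℤ)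
        · rw [hPmid q p (k + 1) (by omega) hk1]
          have he : (k + 1).toNat = k.toNat + 1 := by omega
          rw [he]
          exact lt_trans (hchain k.toNat (by omega)) (by linarith)
        · have hkm1 : k + 1 = (m : ℤ) := by omega
          rw [hPge q p (k + 1) (by omega)]
          have he : k + 1 - (m : ℤ) = 0 := by omega
          rw [he, hIter_zero]
          have h1 : dist (f (cc k.toNat)) (cc (k.toNat + 1)) < δ0 / 8 :=
            hchain k.toNat (by omega)
          have he2 : k.toNat + 1 = m := by omega
          rw [he2, hccm] at h1
          calc dist (f (cc k.toNat)) p ≤ dist (f (cc k.toNat)) y + dist y p :=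
                dist_triangle _ _ _
            _ < δ0 / 8 + ε := by
                have := hdpy p hp; rw [dist_comm] at this; linarith
            _ < δ0 := by linarith
  have hlimit : ∀ q p : X, IsTwoSidedLimitPseudoOrbit f (P q p) := by
    intro q p
    have hev : (fun k : ℤ => dist (f (P q p k)) (P q p (k + 1))) =ᶠ[cofinite]
        (fun _ => (0 : ℝ)) := by
      rw [Filter.eventuallyEq_iff_exists_mem]
      refine ⟨{k : ℤ | k < 0 ∨ (m : ℤ) ≤ k}, ?_, ?_⟩
      · rw [Filter.mem_cofinite]
        have : {k : ℤ | k < 0 ∨ (m : ℤ) ≤ k}ᶜ ⊆ Set.Icc 0 (m : ℤ) := by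
          intro k hk
          simp only [Set.mem_compl_iff, Set.mem_setOf_eq, not_or, not_lt, not_le] at hk
          exact ⟨hk.1, le_of_lt hk.2⟩
        exact (Set.finite_Icc _ _).subset this
      · intro k hk
        show dist (f (P q p k)) (P q p (k + 1)) = (0 : ℝ)
        rw [hjump0 q p k hk, dist_self]
    exact Tendsto.congr' hev.symm tendsto_const_nhds
  have hex : ∀ q ∈ U, ∀ p ∈ S, ∃ zz : X,
      Shadows f (c / 8) zz (P q p) ∧ TwoSidedLimitShadows f zz (P q p) :=
    fun q hq p hp => hLsh (P q p) (hpseudo q hq p hp) (hlimit q p)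
  choose! z hzsh hzlim using hex
  -- closeness of pseudo-orbits
  have hPP : ∀ q ∈ U, ∀ q' ∈ U, ∀ p ∈ S, ∀ p' ∈ S, ∀ k : ℤ,
      dist (P q p k) (P q' p' k) ≤ 2 * ε := by
    intro q hq q' hq' p hp p' hp' k
    by_cases hk : k ≤ 0
    · have he : k = -(((-k).toNat : ℕ) : ℤ) := by omega
      rw [hPle q p k hk, hPle q' p' k hk, he, hIter_neg_natCast, hIter_neg_natCast]
      calc dist ((⇑f.symm)^[(-k).toNat] q) ((⇑f.symm)^[(-k).toNat] q')
          ≤ dist ((⇑f.symm)^[(-k).toNat] q) ((⇑f.symm)^[(-k).toNat] x) +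
            dist ((⇑f.symm)^[(-k).toNat] q') ((⇑f.symm)^[(-k).toNat] x) :=
            dist_triangle_right _ _ _
        _ ≤ ε + ε := add_le_add (hU (Finset.mem_coe.mpr hq) _) (hU (Finset.mem_coe.mpr hq') _)
        _ = 2 * ε := by ring
    · by_cases hkm : k < (m : ℤ)
      · rw [hPmid q p k (by omega) hkm, hPmid q' p' k (by omega) hkm, dist_self]
        have hε : (0 : ℝ) < ε :=
          lt_min (by positivity) (lt_min (by positivity) (by positivity))
        linarith [hε]
      · have hk' : (m : ℤ) ≤ k := by omega
        have he : k - (m : ℤ) = (((k - m).toNat : ℕ) : ℤ) := by omega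
        rw [hPge q p k hk', hPge q' p' k hk', he, hIter_natCast, hIter_natCast]
        calc dist ((⇑f)^[(k - ↑m).toNat] p) ((⇑f)^[(k - ↑m).toNat] p')
            ≤ dist ((⇑f)^[(k - ↑m).toNat] p) ((⇑f)^[(k - ↑m).toNat] y) +
              dist ((⇑f)^[(k - ↑m).toNat] p') ((⇑f)^[(k - ↑m).toNat] y) :=
              dist_triangle_right _ _ _
          _ ≤ ε + ε := add_le_add (hS (Finset.mem_coe.mpr hp) _) (hS (Finset.mem_coe.mpr hp') _)
          _ = 2 * ε := by ring
  have hzc : ∀ q ∈ U, ∀ q' ∈ U, ∀ p ∈ S, ∀ p' ∈ S, ∀ k : ℤ,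
      dist (hIter f k (z q p)) (hIter f k (z q' p')) ≤ c := by
    intro q hq q' hq' p hp p' hp' k
    have h1 := hzsh q hq p hp k
    have h2 := hPP q hq q' hq' p hp p' hp' k
    have h3 := hzsh q' hq' p' hp' k
    have := dist_triangle4 (hIter f k (z q p)) (P q p k) (P q' p' k) (hIter f k (z q' p'))
    have h3' : dist (P q' p' k) (hIter f k (z q' p')) < c / 8 := by
      rwa [dist_comm]
    have hεc' : 2 * ε ≤ c / 4 := by linarith
    linarith
  -- limit shadowing consequences
  have hun : ∀ q ∈ U, ∀ p ∈ S,
      Tendsto (fun j : ℕ => dist ((⇑f.symm)^[j] (z q p)) ((⇑f.symm)^[j] q))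
        atTop (nhds 0) := by
    intro q hq p hp
    have h0 := hzlim q hq p hp
    rw [TwoSidedLimitShadows, Int.cofinite_eq] at h0
    have h1 : Tendsto (fun k : ℤ => dist (hIter f k (z q p)) (P q p k)) atBot (nhds 0) :=
      h0.mono_left le_sup_left
    have h2 : Tendsto (fun k : ℤ => dist (hIter f k (z q p)) (hIter f k q)) atBot (nhds 0) := by
      refine Tendsto.congr' ?_ h1
      exact (eventually_le_atBot (0 : ℤ)).mono fun k hk => by
        show dist (hIter f k (z q p)) (P q p k) = dist (hIter f k (z q p)) (hIter f k q)
        rw [hPle q p k hk]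
    have h3 : Tendsto (fun j : ℕ => -((j : ℕ) : ℤ)) atTop atBot :=
      tendsto_neg_atTop_atBot.comp tendsto_natCast_atTop_atTop
    refine (h2.comp h3).congr fun j => ?_
    simp only [Function.comp_apply]
    rw [hIter_neg_natCast, hIter_neg_natCast]
  have hst : ∀ q ∈ U, ∀ p ∈ S,
      Tendsto (fun j : ℕ => dist ((⇑f)^[j] (hIter f (m : ℤ) (z q p))) ((⇑f)^[j] p))
        atTop (nhds 0) := by
    intro q hq p hp
    have h0 := hzlim q hq p hp
    rw [TwoSidedLimitShadows, Int.cofinite_eq] at h0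
    have h1 : Tendsto (fun k : ℤ => dist (hIter f k (z q p)) (P q p k)) atTop (nhds 0) :=
      h0.mono_left le_sup_right
    have h2 : Tendsto (fun k : ℤ => dist (hIter f k (z q p)) (hIter f (k - m) p))
        atTop (nhds 0) := by
      refine Tendsto.congr' ?_ h1
      exact (eventually_ge_atTop ((m : ℕ) : ℤ)).mono fun k hk => by
        show dist (hIter f k (z q p)) (P q p k) =
          dist (hIter f k (z q p)) (hIter f (k - m) p)
        rw [hPge q p k hk]
    have h3 : Tendsto (fun j : ℕ => ((j : ℕ) : ℤ) + (m : ℤ)) atTop atTop :=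
      tendsto_atTop_add_const_right atTop ((m : ℕ) : ℤ) tendsto_natCast_atTop_atTop
    refine (h2.comp h3).congr fun j => ?_
    simp only [Function.comp_apply]
    rw [add_sub_cancel_right, hIter_natCast, hIter_add, hIter_natCast]
  -- injectivity
  have hinj : ∀ q ∈ U, ∀ q' ∈ U, ∀ p ∈ S, ∀ p' ∈ S,
      z q p = z q' p' → q = q' ∧ p = p' := by
    intro q hq q' hq' p hp p' hp' heq
    constructor
    · by_contra hne
      refine hUdist q hq q' hq' hne ?_
      have hb := hun q hq p hp
      have hb' := hun q' hq' p' hp'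
      rw [heq] at hb
      have hsum : Tendsto (fun j : ℕ =>
          dist ((⇑f.symm)^[j] (z q' p')) ((⇑f.symm)^[j] q) +
          dist ((⇑f.symm)^[j] (z q' p')) ((⇑f.symm)^[j] q')) atTop (nhds 0) := by
        simpa using hb.add hb'
      exact squeeze_zero (fun j => dist_nonneg)
        (fun j => dist_triangle_left _ _ _) hsum
    · by_contra hne
      refine hSdist p hp p' hp' hne ?_
      have hb := hst q hq p hp
      have hb' := hst q' hq' p' hp'
      rw [heq] at hb
      have hsum : Tendsto (fun j : ℕ =>
          dist ((⇑f)^[j] (hIter f (m : ℤ) (z q' p'))) ((⇑f)^[j] p) +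
          dist ((⇑f)^[j] (hIter f (m : ℤ) (z q' p'))) ((⇑f)^[j] p')) atTop (nhds 0) := by
        simpa using hb.add hb'
      exact squeeze_zero (fun j => dist_nonneg)
        (fun j => dist_triangle_left _ _ _) hsum
  -- count
  have hinjOn : Set.InjOn (fun a : X × X => z a.1 a.2) ↑(U ×ˢ S) := by
    intro a ha b hb hab
    simp only [Finset.coe_product, Set.mem_prod, Finset.mem_coe] at ha hb
    obtain ⟨h1, h2⟩ := hinj a.1 ha.1 b.1 hb.1 a.2 ha.2 b.2 hb.2 hab
    exact Prod.ext h1 h2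
  set T : Finset X := (U ×ˢ S).image (fun a : X × X => z a.1 a.2) with hTdef
  have hTsub : ↑T ⊆ localStable f c (z q₀ p₀) ∩ localUnstable f c (z q₀ p₀) := by
    intro v hv
    rw [hTdef] at hv
    obtain ⟨a, ha, rfl⟩ := Finset.mem_image.mp (Finset.mem_coe.mp hv)
    obtain ⟨ha1, ha2⟩ := Finset.mem_product.mp ha
    constructor
    · intro j
      have := hzc a.1 ha1 q₀ hq₀ a.2 ha2 p₀ hp₀ ((j : ℕ) : ℤ)
      rwa [hIter_natCast, hIter_natCast] at this
    · intro j
      have := hzc a.1 ha1 q₀ hq₀ a.2 ha2 p₀ hp₀ (-((j : ℕ) : ℤ))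
      rwa [hIter_neg_natCast, hIter_neg_natCast] at this
  calc U.card * S.card = (U ×ˢ S).card := (Finset.card_product U S).symm
    _ = T.card := by rw [hTdef]; exact (Finset.card_image_of_injOn hinjOn).symm
    _ ≤ n := hcard (z q₀ p₀) T hTsub
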